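/- arXiv:2411.19018 — 6 statements merged into one kernel-verified Lean document; each statement's English description precedes it below -/
import Mathlib

section
/- Let W ⊆ ℂ^m be a ℂ-linear subspace and let z ∈ (ℂˣ)^m. Define ℝ-linear maps P, Q : W → ℝ^m by P(w) = (Re(w_1/z_1), …, Re(w_m/z_m)) and Q(w) = (Im(w_1/z_1), …, Im(w_m/z_m)) (these are the differentials at z of Log and of Arg, restricted to W). Then multiplication by √−1 maps the kernel of Q (which is W ∩ z·ℝ^m = {w ∈ W : w_j/z_j ∈ ℝ for all j}) ℝ-linearly isomorphically onto the kernel of P, and consequently P and Q have equal ℝ-rank. (This is the key step of Proposition 1.1: the amoeba and coamoeba of a subvariety of (ℂˣ)^m have the same dimension.) -/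
/-!
Multiplication by `√-1` is a real-linear automorphism `J` of the complex space `W`, and
`Re (√-1 · ζ) = - Im ζ` gives `P ∘ J = -Q`. Precomposing with an automorphism and negating change
neither kernels (up to transport by `J`) nor ranges, so `J` carries `ker Q` onto `ker P` and
`P`, `Q` have the same range, hence the same rank.
-/

section CompEqNeg

variable {R V V' F : Type*} [Ring R] [AddCommGroup V] [Module R V] [AddCommGroup V'] [Module R V']
  [AddCommGroup F] [Module R F] {P : V' →ₗ[R] F} {Q : V →ₗ[R] F}

theorem LinearEquiv.map_ker_eq_of_comp_eq_neg (e : V ≃ₗ[R] V') (h : P ∘ₗ e = -Q) :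
    (LinearMap.ker Q).map (e : V →ₗ[R] V') = LinearMap.ker P := by
  rw [← LinearMap.ker_neg, ← h, LinearMap.ker_comp]
  exact Submodule.map_comap_eq_of_surjective e.surjective _

theorem LinearEquiv.range_eq_of_comp_eq_neg (e : V ≃ₗ[R] V') (h : P ∘ₗ e = -Q) :
    LinearMap.range P = LinearMap.range Q := by
  rw [← LinearMap.range_neg Q, ← h, LinearMap.range_comp_of_range_eq_top P e.range]

end CompEqNeg

theorem Complex.im_eq_zero_iff_exists_ofReal {ζ : ℂ} : ζ.im = 0 ↔ ∃ r : ℝ, ζ = r :=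
  Complex.conj_eq_iff_im.symm.trans Complex.conj_eq_iff_real

theorem stmt0_general {m : ℕ} (W : Submodule ℂ (Fin m → ℂ)) (z : Fin m → ℂ)
    (P Q : W →ₗ[ℝ] (Fin m → ℝ))
    (hP : ∀ w : W, ∀ i, P w i = ((w : Fin m → ℂ) i / z i).re)
    (hQ : ∀ w : W, ∀ i, Q w i = ((w : Fin m → ℂ) i / z i).im) :
    (∀ w : W, w ∈ LinearMap.ker Q ↔ ∀ j, ∃ r : ℝ, (w : Fin m → ℂ) j / z j = (r : ℂ)) ∧
    (∃ e : LinearMap.ker Q ≃ₗ[ℝ] LinearMap.ker P,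
      ∀ x : LinearMap.ker Q,
        (((e x : W) : Fin m → ℂ)) = Complex.I • (((x : W) : Fin m → ℂ))) ∧
    LinearMap.rank P = LinearMap.rank Q := by
  let J : W ≃ₗ[ℝ] W := (LinearEquiv.smulOfNeZero ℂ W Complex.I Complex.I_ne_zero).restrictScalars ℝ
  have hPJ : P ∘ₗ J = -Q := by
    ext w i
    simp [J, hP, hQ, mul_div_assoc]
  refine ⟨fun w => ?_, ⟨J.ofSubmodules _ _ (J.map_ker_eq_of_comp_eq_neg hPJ), fun x => rfl⟩, ?_⟩
  · simp only [LinearMap.mem_ker, funext_iff, Pi.zero_apply, hQ,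
      Complex.im_eq_zero_iff_exists_ofReal]
  · rw [LinearMap.rank, LinearMap.rank, J.range_eq_of_comp_eq_neg hPJ]

/-- Let `W ⊆ ℂ^m` be a ℂ-linear subspace and `z ∈ (ℂˣ)^m`.  Let
`P Q : W → ℝ^m` be the ℝ-linear maps `P w = (Re(w_i/z_i))_i` and `Q w = (Im(w_i/z_i))_i`
(the differentials at `z` of `Log` and `Arg` restricted to `W`).  Then the kernel of `Q`
is `{w ∈ W : w_j/z_j ∈ ℝ for all j}`, multiplication by `√-1` maps `ker Q` ℝ-linearly
isomorphically onto `ker P`, and consequently `P` and `Q` have equal ℝ-rank. -/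
theorem stmt0 {m : ℕ} (W : Submodule ℂ (Fin m → ℂ)) (z : Fin m → ℂ)
    (hz : ∀ i, z i ≠ 0)
    (P Q : W →ₗ[ℝ] (Fin m → ℝ))
    (hP : ∀ w : W, ∀ i, P w i = ((w : Fin m → ℂ) i / z i).re)
    (hQ : ∀ w : W, ∀ i, Q w i = ((w : Fin m → ℂ) i / z i).im) :
    (∀ w : W, w ∈ LinearMap.ker Q ↔ ∀ j, ∃ r : ℝ, (w : Fin m → ℂ) j / z j = (r : ℂ)) ∧
    (∃ e : LinearMap.ker Q ≃ₗ[ℝ] LinearMap.ker P,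
      ∀ x : LinearMap.ker Q,
        (((e x : W) : Fin m → ℂ)) = Complex.I • (((x : W) : Fin m → ℂ))) ∧
    LinearMap.rank P = LinearMap.rank Q :=
  stmt0_general W z P Q hP hQ
end

section
/- Let φ : (ℂˣ)^m → (ℂˣ)^n be a monomial map with matrix M ∈ ℤ^{n×m}, let X ⊆ (ℂˣ)^m be any subset, and let Y be the closure of φ(X) in (ℂˣ)^n. Then Log(Y) equals the closure in ℝ^n of M(Log(X)); that is, the amoeba 𝒜(Y) is the closure of the image of the amoeba 𝒜(X) under the induced linear map. (Proposition 1.3(1).) -/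
open Filter Topology

/-- `Log : (ℂˣ)^n → ℝ^n`, the coordinatewise logarithm of absolute value. -/
noncomputable def LogMap {n : ℕ} (z : Fin n → ℂ) : Fin n → ℝ :=
  fun i => Real.log ‖z i‖

/-- The complex torus `(ℂˣ)^n` inside `ℂ^n`. -/
def torus (n : ℕ) : Set (Fin n → ℂ) := {z | ∀ i, z i ≠ 0}

/-- The monomial map `(ℂˣ)^m → (ℂˣ)^n` with exponent matrix `M`. -/
noncomputable def monomialMap {m n : ℕ} (M : Matrix (Fin n) (Fin m) ℤ)
    (z : Fin m → ℂ) : Fin n → ℂ :=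
  fun i => ∏ j, z j ^ (M i j)

lemma logMap_monomial {m n : ℕ} (M : Matrix (Fin n) (Fin m) ℤ)
    {z : Fin m → ℂ} (hz : ∀ j, z j ≠ 0) :
    LogMap (monomialMap M z) = fun i => ∑ j, (M i j : ℝ) * LogMap z j := by
  funext i
  unfold LogMap monomialMap
  rw [norm_prod, Real.log_prod]
  · exact Finset.sum_congr rfl fun j _ => by rw [norm_zpow, Real.log_zpow]
  · intro j _
    rw [norm_zpow]
    exact zpow_ne_zero _ (norm_ne_zero_iff.mpr (hz j))

lemma logMap_continuousAt {n : ℕ} {y : Fin n → ℂ} (hy : ∀ i, y i ≠ 0) :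
    ContinuousAt LogMap y := by
  unfold LogMap
  apply continuousAt_pi.mpr
  intro i
  have hc : ContinuousAt (fun z : Fin n → ℂ => ‖z i‖) y :=
    continuous_norm.continuousAt.comp (continuous_apply i).continuousAt
  exact hc.log (norm_ne_zero_iff.mpr (hy i))

/-- If `φ` is the monomial map with matrix `M`, `X ⊆ (ℂˣ)^m` any subset,
and `Y` is the closure of `φ(X)` in `(ℂˣ)^n`, then `Log(Y)` is the closure in `ℝ^n` of the
image of `Log(X)` under the linear map induced by `M`. -/
theorem stmt1 {m n : ℕ} (M : Matrix (Fin n) (Fin m) ℤ)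
    (X : Set (Fin m → ℂ)) (hX : X ⊆ torus m)
    (Y : Set (Fin n → ℂ))
    (hY : Y = closure (monomialMap M '' X) ∩ torus n) :
    LogMap '' Y =
      closure ((fun x : Fin m → ℝ => fun i => ∑ j, (M i j : ℝ) * x j) '' (LogMap '' X)) := by
  subst hY
  set S : Set (Fin n → ℂ) := monomialMap M '' X with hS
  have hStorus : S ⊆ torus n := by
    rintro _ ⟨z, hzX, rfl⟩ i
    exact Finset.prod_ne_zero_iff.mpr fun j _ => zpow_ne_zero _ (hX hzX j)
  have hScongr : (fun x : Fin m → ℝ => fun i => ∑ j, (M i j : ℝ) * x j) '' (LogMap '' X)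
      = LogMap '' S := by
    rw [hS, Set.image_image, Set.image_image]
    exact Set.image_congr fun z hz => by
      rw [logMap_monomial M (fun j => hX hz j)]
  rw [hScongr]
  apply Set.Subset.antisymm
  · rintro _ ⟨y, ⟨hyc, hyt⟩, rfl⟩
    exact ((logMap_continuousAt hyt).continuousWithinAt).mem_closure_image hyc
  · intro w hw
    obtain ⟨u, hu, hulim⟩ := mem_closure_iff_seq_limit.mp hw
    choose x hxS hxL using hu
    have hxt : ∀ k i, x k i ≠ 0 := fun k i => hStorus (hxS k) i
    have habsx : ∀ k i, ‖x k i‖ = Real.exp (u k i) := by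
      intro k i
      have h1 : Real.log (‖x k i‖) = u k i := congrFun (hxL k) i
      rw [← h1, Real.exp_log (norm_pos_iff.mpr (hxt k i))]
    set y : ℕ → Fin n → ℂ :=
      fun k i => ((Real.exp (w i) / ‖x k i‖ : ℝ) : ℂ) * x k i with hy
    have habsy : ∀ k i, ‖y k i‖ = Real.exp (w i) := by
      intro k i
      rw [hy]
      simp only [norm_mul, Complex.norm_real, Real.norm_eq_abs]
      rw [abs_of_pos (div_pos (Real.exp_pos _) (norm_pos_iff.mpr (hxt k i)))]
      rw [div_mul_cancel₀ _ (norm_ne_zero_iff.mpr (hxt k i))]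
    have hyK : ∀ k, y k ∈ Set.pi Set.univ (fun i => Metric.sphere (0:ℂ) (Real.exp (w i))) := by
      intro k i _
      simp [Metric.mem_sphere, Complex.dist_eq, habsy k i]
    have hK : IsCompact (Set.pi Set.univ fun i => Metric.sphere (0:ℂ) (Real.exp (w i))) :=
      isCompact_univ_pi fun i => isCompact_sphere 0 _
    obtain ⟨yl, hylK, φs, hφs, hconv⟩ := hK.tendsto_subseq hyK
    have habsyl : ∀ i, ‖yl i‖ = Real.exp (w i) := by
      intro i
      have := hylK i (Set.mem_univ i)
      simpa [Metric.mem_sphere, Complex.dist_eq] using this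
    have hylt : ∀ i, yl i ≠ 0 := by
      intro i hzero
      have h := habsyl i
      rw [hzero, norm_zero] at h
      exact (Real.exp_pos (w i)).ne h
    have hxeq : ∀ k i, x k i = ((Real.exp (u k i) / Real.exp (w i) : ℝ) : ℂ) * y k i := by
      intro k i
      have hone : Real.exp (u k i) / Real.exp (w i) * (Real.exp (w i) / ‖x k i‖)
          = 1 := by
        rw [habsx k i]
        field_simp
      rw [hy, ← mul_assoc, ← Complex.ofReal_mul, hone, Complex.ofReal_one, one_mul]
    have hxconv : Tendsto (fun k => x (φs k)) atTop (𝓝 yl) := by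
      rw [tendsto_pi_nhds]
      intro i
      have h1 : Tendsto (fun k => u (φs k) i) atTop (𝓝 (w i)) :=
        ((tendsto_pi_nhds.mp hulim) i).comp hφs.tendsto_atTop
      have h2r : Tendsto (fun k => Real.exp (u (φs k) i) / Real.exp (w i)) atTop (𝓝 1) := by
        have h3 := (Real.continuous_exp.continuousAt.tendsto.comp h1).div_const (Real.exp (w i))
        simpa [div_self (Real.exp_ne_zero (w i))] using h3
      have h2 : Tendsto (fun k => ((Real.exp (u (φs k) i) / Real.exp (w i) : ℝ) : ℂ))
          atTop (𝓝 1) := by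
        have := (Complex.continuous_ofReal.tendsto 1).comp h2r
        simpa only [Function.comp_def, Complex.ofReal_one] using this
      have h3 : Tendsto (fun k => y (φs k) i) atTop (𝓝 (yl i)) := by
        have := tendsto_pi_nhds.mp hconv i
        simpa [Function.comp] using this
      have h4 := h2.mul h3
      rw [one_mul] at h4
      have heq : (fun k => x (φs k) i)
          = fun k => ((Real.exp (u (φs k) i) / Real.exp (w i) : ℝ) : ℂ) * y (φs k) i := by
        funext k; exact hxeq (φs k) i
      rw [heq]
      exact h4
    have hylc : yl ∈ closure S :=
      mem_closure_of_tendsto hxconv (Eventually.of_forall fun k => hxS (φs k))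
    refine ⟨yl, ⟨hylc, hylt⟩, ?_⟩
    funext i
    unfold LogMap
    rw [habsyl i, Real.log_exp]
end

section
/- Let φ : (ℂˣ)^m → (ℂˣ)^n be a monomial map with matrix M ∈ ℤ^{n×m}, let X ⊆ (ℂˣ)^m be any subset, and let Y be the closure of φ(X) in (ℂˣ)^n. Then the image φ_𝕋(c𝒜(X)) = Arg(φ(X)) is dense in the coamoeba c𝒜(Y), and c𝒜(Y) ⊆ φ_𝕋(cl(c𝒜(X))) = cl(φ_𝕋(c𝒜(X))), where cl denotes closure in 𝕋^m resp. 𝕋^n. (Proposition 1.3(3).) -/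
open Filter Topology

/-- `Arg : (ℂˣ)^n → 𝕋^n`, the coordinatewise argument `z_i ↦ z_i/|z_i|`. -/
noncomputable def ArgMap {ι : Type*} (z : ι → ℂ) : ι → ℂ :=
  fun i => z i / ‖z i‖

lemma absC_ne_zero {w : ℂ} (h : w ≠ 0) : ((‖w‖ : ℝ) : ℂ) ≠ 0 :=
  Complex.ofReal_ne_zero.mpr (norm_ne_zero_iff.mpr h)

lemma monomial_ne_zero {m n : ℕ} (M : Matrix (Fin n) (Fin m) ℤ) {z : Fin m → ℂ}
    (hz : ∀ j, z j ≠ 0) (i : Fin n) : monomialMap M z i ≠ 0 :=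
  Finset.prod_ne_zero_iff.mpr fun j _ => zpow_ne_zero _ (hz j)

lemma argMap_ne_zero {ι : Type*} {z : ι → ℂ} (hz : ∀ i, z i ≠ 0) (i : ι) :
    ArgMap z i ≠ 0 :=
  div_ne_zero (hz i) (absC_ne_zero (hz i))

lemma arg_monomial {m n : ℕ} (M : Matrix (Fin n) (Fin m) ℤ) {z : Fin m → ℂ}
    (hz : ∀ j, z j ≠ 0) : ArgMap (monomialMap M z) = monomialMap M (ArgMap z) := by
  funext i
  have habs : ((‖∏ j, z j ^ M i j‖ : ℝ) : ℂ)
      = ∏ j, ((‖z j‖ : ℝ) : ℂ) ^ M i j := by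
    rw [norm_prod, Complex.ofReal_prod]
    exact Finset.prod_congr rfl fun j _ => by rw [norm_zpow, Complex.ofReal_zpow]
  simp only [ArgMap, monomialMap, habs]
  rw [← Finset.prod_div_distrib]
  exact Finset.prod_congr rfl fun j _ => (div_zpow _ _ _).symm

lemma argMap_continuousAt {ι : Type*} {z : ι → ℂ} (hz : ∀ i, z i ≠ 0) :
    ContinuousAt (ArgMap (ι := ι)) z := by
  apply continuousAt_pi.2
  intro i
  exact ContinuousAt.div (continuous_apply i).continuousAt
    ((Complex.continuous_ofReal.comp
      (continuous_norm.comp (continuous_apply i))).continuousAt)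
    (absC_ne_zero (hz i))

lemma monomial_continuousAt {m n : ℕ} (M : Matrix (Fin n) (Fin m) ℤ) {z : Fin m → ℂ}
    (hz : ∀ j, z j ≠ 0) : ContinuousAt (monomialMap M) z := by
  apply continuousAt_pi.2
  intro i
  exact tendsto_finset_prod _ fun j _ =>
    ContinuousAt.zpow₀ (f := fun w : Fin m → ℂ => w j) (continuous_apply j).continuousAt
      (M i j) (Or.inl (hz j))

/-- If `φ` is the monomial map with matrix `M`, `X ⊆ (ℂˣ)^m` any subset,
and `Y` the closure of `φ(X)` in `(ℂˣ)^n`, then `Arg(φ(X)) = φ_𝕋(c𝒜(X))` is dense in the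
coamoeba `c𝒜(Y)`, and `c𝒜(Y) ⊆ φ_𝕋(cl(c𝒜(X))) = cl(φ_𝕋(c𝒜(X)))`. -/
theorem stmt3 {m n : ℕ} (M : Matrix (Fin n) (Fin m) ℤ)
    (X : Set (Fin m → ℂ)) (hX : X ⊆ torus m)
    (Y : Set (Fin n → ℂ))
    (hY : Y = closure (monomialMap M '' X) ∩ torus n) :
    ArgMap '' (monomialMap M '' X) ⊆ ArgMap '' Y ∧
    ArgMap '' Y ⊆ closure (ArgMap '' (monomialMap M '' X)) ∧
    ArgMap '' Y ⊆ monomialMap M '' closure (ArgMap '' X) ∧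
    monomialMap M '' closure (ArgMap '' X) = closure (monomialMap M '' (ArgMap '' X)) := by
  -- φ(X) ⊆ Y
  have hsub : monomialMap M '' X ⊆ Y := by
    rw [hY]
    rintro _ ⟨x, hx, rfl⟩
    exact ⟨subset_closure ⟨x, hx, rfl⟩, fun i => monomial_ne_zero M (hX hx) i⟩
  have h1 : ArgMap '' (monomialMap M '' X) ⊆ ArgMap '' Y := Set.image_mono hsub
  -- Part 2
  have h2 : ArgMap '' Y ⊆ closure (ArgMap '' (monomialMap M '' X)) := by
    rintro _ ⟨y, hy, rfl⟩
    rw [hY] at hy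
    exact (argMap_continuousAt hy.2).continuousWithinAt.mem_closure_image hy.1
  -- commutation of image
  have himg : ArgMap '' (monomialMap M '' X) = monomialMap M '' (ArgMap '' X) := by
    rw [← Set.image_comp, ← Set.image_comp]
    exact Set.image_congr fun x hx => arg_monomial M (hX hx)
  -- Part 4
  have h4 : monomialMap M '' closure (ArgMap '' X) = closure (monomialMap M '' (ArgMap '' X)) := by
    set S := ArgMap '' X with hSdef
    set T : Set (Fin m → ℂ) := Set.pi Set.univ fun _ => Metric.sphere (0 : ℂ) 1 with hTdef
    have hTc : IsCompact T := isCompact_univ_pi fun _ => isCompact_sphere 0 1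
    have hST : S ⊆ T := by
      rintro _ ⟨x, hx, rfl⟩ i _
      simp only [Metric.mem_sphere, dist_zero_right, ArgMap]
      rw [norm_div, Complex.norm_real, norm_norm,
        div_self (norm_ne_zero_iff.mpr (hX hx i))]
    have hclT : closure S ⊆ T := closure_minimal hST hTc.isClosed
    have hcltor : closure S ⊆ torus m := fun z hz i => by
      have := hclT hz i (Set.mem_univ i)
      simp only [Metric.mem_sphere, dist_zero_right] at this
      intro h0; rw [h0] at this; simp at this
    have hcont : ContinuousOn (monomialMap M) (closure S) := fun z hz =>
      (monomial_continuousAt M (hcltor hz)).continuousWithinAt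
    have hcompact : IsCompact (closure S) :=
      hTc.of_isClosed_subset isClosed_closure hclT
    have himgc : IsCompact (monomialMap M '' closure S) := hcompact.image_of_continuousOn hcont
    apply Set.Subset.antisymm
    · exact hcont.image_closure
    · exact closure_minimal (Set.image_mono subset_closure) himgc.isClosed
  -- Part 3
  have h3 : ArgMap '' Y ⊆ monomialMap M '' closure (ArgMap '' X) := by
    rw [h4, ← himg]
    exact h2
  exact ⟨h1, h2, h3, h4⟩
end

section
/- Let V ⊆ ℂ^n be a ℂ-linear subspace not contained in any coordinate hyperplane, let F be a flat of V with ∅ ⊊ F ⊊ {1,…,n} and flat subspace L = L_F, and let a > b be integers. Then the set of w ∈ (ℂˣ)^n for which there exist sequences (t_k) ⊆ ℂˣ with |t_k| → ∞ and (x_k) ⊆ V ∩ (ℂˣ)^n such that t_k^a·π_F(x_k) → π_F(w) and t_k^b·π_{F^c}(x_k) → π_{F^c}(w) equals the product (π_F(V) ∩ (ℂˣ)^F) × (π_{F^c}(L) ∩ (ℂˣ)^{F^c}) ⊆ (ℂˣ)^F × (ℂˣ)^{F^c} = (ℂˣ)^n. (This is the set-theoretic content of Lemma 2.7 for the one-step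 flag {0} ⊊ L ⊊ V: the initial scheme ini_ω ℋ^c of the hyperplane complement for a weight ω with value a on F and b on F^c equals (ℋ/L)^c × (ℋ|_L)^c.) -/
open Filter Topology

/-- **Lemma 2.7, one-step flag.** Let `V ⊆ ℂ^n` be a linear subspace
contained in no coordinate hyperplane, `F` a proper nonempty flat of `V` with flat
subspace `L = L_F`, and `a > b` integers.  The set of `w ∈ (ℂˣ)^n` which are limits of
`(t_k^a·π_F(x_k), t_k^b·π_{F^c}(x_k))` for sequences `(x_k) ⊆ V ∩ (ℂˣ)^n` and
`(t_k) ⊆ ℂˣ` with `|t_k| → ∞` equals the product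
`(π_F(V) ∩ (ℂˣ)^F) × (π_{F^c}(L) ∩ (ℂˣ)^{F^c})`, i.e. the initial scheme
`ini_ω ℋ^c = (ℋ/L)^c × (ℋ|_L)^c`. -/
theorem stmt8 {n : ℕ} (V : Submodule ℂ (Fin n → ℂ))
    (hV : ∀ i, ∃ v ∈ V, v i ≠ 0)
    (F : Set (Fin n))
    (hflat : F = {i | ∀ v ∈ V, (∀ j ∈ F, v j = 0) → v i = 0})
    (hFne : F ≠ ∅) (hFproper : F ≠ Set.univ)
    (a b : ℤ) (hab : b < a) :
    {w : Fin n → ℂ | (∀ i, w i ≠ 0) ∧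
        ∃ t : ℕ → ℂ, ∃ xk : ℕ → Fin n → ℂ,
          (∀ k, t k ≠ 0) ∧ (∀ k, xk k ∈ V ∧ ∀ i, xk k i ≠ 0) ∧
          Tendsto (fun k => ‖t k‖) atTop atTop ∧
          Tendsto (fun k => fun i : F => t k ^ a * xk k i) atTop
            (𝓝 (fun i : F => w i)) ∧
          Tendsto (fun k => fun i : ↥(Fᶜ) => t k ^ b * xk k i) atTop
            (𝓝 (fun i : ↥(Fᶜ) => w i))} =
      {w : Fin n → ℂ |
        (fun i : F => w i) ∈
          {u : F → ℂ | ∃ v ∈ V, (∀ i : F, u i = v i) ∧ ∀ i ∈ F, v i ≠ 0} ∧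
        (fun i : ↥(Fᶜ) => w i) ∈
          {u : ↥(Fᶜ) → ℂ | ∃ v ∈ V, (∀ j ∈ F, v j = 0) ∧
            (∀ i : ↥(Fᶜ), u i = v i) ∧ ∀ i ∉ F, v i ≠ 0}} := by
  classical
  ext w
  simp only [Set.mem_setOf_eq]
  constructor
  · rintro ⟨hw, t, xk, ht0, hxk, habs, hFt, hFct⟩
    -- t^(b-a) → 0
    have hba : b - a < 0 := by omega
    have htz : Tendsto (fun k => t k ^ (b - a)) atTop (𝓝 0) := by
      rw [tendsto_zero_iff_norm_tendsto_zero]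
      have : Tendsto (fun k => ‖t k‖ ^ (b - a)) atTop (𝓝 0) :=
        (tendsto_zpow_atTop_zero hba).comp habs
      simpa [norm_zpow] using this
    constructor
    · -- first component: w|_F in closure of π_F(V) = π_F(V)
      set π : (Fin n → ℂ) →ₗ[ℂ] (F → ℂ) := LinearMap.funLeft ℂ ℂ (fun i : F => (i : Fin n))
      have hclosed : IsClosed ((V.map π : Submodule ℂ (F → ℂ)) : Set (F → ℂ)) :=
        Submodule.closed_of_finiteDimensional _
      have hmem : (fun i : F => w i) ∈ (V.map π : Submodule ℂ (F → ℂ)) := by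
        refine hclosed.mem_of_tendsto hFt (Eventually.of_forall fun k => ?_)
        exact ⟨(t k ^ a) • xk k, V.smul_mem _ (hxk k).1, rfl⟩
      obtain ⟨v, hvV, hv⟩ := hmem
      refine ⟨v, hvV, fun i => ?_, fun i hi => ?_⟩
      · exact (congrFun hv i).symm
      · have : w i = v i := (congrFun hv ⟨i, hi⟩).symm
        rw [← this]; exact hw i
    · -- second component: limit of t^b • xk
      set z : Fin n → ℂ := fun i => if i ∈ F then 0 else w i with hz
      have hzt : Tendsto (fun k => fun i => t k ^ b * xk k i) atTop (𝓝 z) := by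
        rw [tendsto_pi_nhds]
        intro i
        by_cases hi : i ∈ F
        · have h1 : Tendsto (fun k => t k ^ a * xk k i) atTop (𝓝 (w i)) :=
            tendsto_pi_nhds.mp hFt ⟨i, hi⟩
          have h2 : Tendsto (fun k => t k ^ (b - a) * (t k ^ a * xk k i)) atTop
              (𝓝 (0 * w i)) := htz.mul h1
          have heq : ∀ k, t k ^ (b - a) * (t k ^ a * xk k i) = t k ^ b * xk k i := by
            intro k
            rw [← mul_assoc, ← zpow_add₀ (ht0 k)]
            norm_num
          simp only [heq] at h2
          simpa [hz, hi] using h2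
        · have h1 : Tendsto (fun k => t k ^ b * xk k i) atTop (𝓝 (w i)) :=
            tendsto_pi_nhds.mp hFct ⟨i, hi⟩
          simpa [hz, hi] using h1
      have hzV : z ∈ V := by
        have hclosed : IsClosed (V : Set (Fin n → ℂ)) :=
          Submodule.closed_of_finiteDimensional _
        refine hclosed.mem_of_tendsto hzt (Eventually.of_forall fun k => ?_)
        exact V.smul_mem (t k ^ b) (hxk k).1
      refine ⟨z, hzV, fun j hj => by simp [hz, hj], fun i => ?_, fun i hi => ?_⟩
      · rcases i with ⟨i, hi⟩
        simp only [Set.mem_compl_iff] at hi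
        simp [hz, hi]
      · simpa [hz, hi] using hw i
  · rintro ⟨⟨v, hvV, hvF, hvFne⟩, ⟨u, huV, huF0, huFc, huFcne⟩⟩
    have hwF : ∀ i ∈ F, w i = v i := fun i hi => hvF ⟨i, hi⟩
    have hwFc : ∀ i ∉ F, w i = u i := fun i hi => huFc ⟨i, hi⟩
    refine ⟨fun i => ?_, ?_⟩
    · by_cases hi : i ∈ F
      · rw [hwF i hi]; exact hvFne i hi
      · rw [hwFc i hi]; exact huFcne i hi
    · set C : ℝ := 1 + ∑ i : Fin n, ‖v i‖ / ‖u i‖ with hC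
      have hsum : (0:ℝ) ≤ ∑ i : Fin n, ‖v i‖ / ‖u i‖ :=
        Finset.sum_nonneg fun i _ => div_nonneg (norm_nonneg _) (norm_nonneg _)
      have hC1 : (1:ℝ) ≤ C := by simp [hC]; linarith
      have hCi : ∀ i, ‖v i‖ / ‖u i‖ < C := by
        intro i
        have : ‖v i‖ / ‖u i‖
            ≤ ∑ j : Fin n, ‖v j‖ / ‖u j‖ :=
          Finset.single_le_sum (f := fun j => ‖v j‖ / ‖u j‖)
            (fun j _ => div_nonneg (norm_nonneg _) (norm_nonneg _))
            (Finset.mem_univ i)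
        linarith
      set r : ℕ → ℝ := fun k => (k : ℝ) + C with hr
      have hr1 : ∀ k, (1:ℝ) ≤ r k := by
        intro k
        have : (0:ℝ) ≤ (k:ℝ) := Nat.cast_nonneg k
        simp only [hr]; linarith
      have hrpos : ∀ k, (0:ℝ) < r k := fun k => lt_of_lt_of_le one_pos (hr1 k)
      set t : ℕ → ℂ := fun k => (r k : ℂ) with htdef
      have ht0 : ∀ k, t k ≠ 0 := by
        intro k
        simp only [htdef, ne_eq, Complex.ofReal_eq_zero]
        exact (hrpos k).ne'
      have habst : ∀ k, ‖t k‖ = r k := by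
        intro k
        simp only [htdef, Complex.norm_real, Real.norm_eq_abs]
        exact abs_of_pos (hrpos k)
      set xk : ℕ → Fin n → ℂ := fun k => (t k ^ (-a)) • v + (t k ^ (-b)) • u with hxkdef
      have hxki : ∀ k i, xk k i = t k ^ (-a) * v i + t k ^ (-b) * u i := by
        intro k i; simp [hxkdef]
      refine ⟨t, xk, ht0, fun k => ⟨?_, fun i => ?_⟩, ?_, ?_, ?_⟩
      · exact V.add_mem (V.smul_mem _ hvV) (V.smul_mem _ huV)
      · rw [hxki]
        by_cases hi : i ∈ F
        · rw [huF0 i hi, mul_zero, add_zero]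
          exact mul_ne_zero (zpow_ne_zero _ (ht0 k)) (hvFne i hi)
        · have hkey : t k ^ (-b) * (t k ^ (b - a) * v i + u i)
              = t k ^ (-a) * v i + t k ^ (-b) * u i := by
            rw [mul_add, ← mul_assoc, ← zpow_add₀ (ht0 k),
              show -b + (b - a) = -a by ring]
          rw [← hkey]
          refine mul_ne_zero (zpow_ne_zero _ (ht0 k)) ?_
          intro h0
          have hui : u i = -(t k ^ (b - a) * v i) := by linear_combination h0
          have habs : ‖u i‖ = (r k) ^ (b - a) * ‖v i‖ := by
            rw [hui, norm_neg, norm_mul, norm_zpow, habst k]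
          have hune : ‖u i‖ ≠ 0 := by
            simpa using huFcne i hi
          have hupos : 0 < ‖u i‖ :=
            lt_of_le_of_ne (norm_nonneg _) (Ne.symm hune)
          -- |v i| < r k ^ (a - b) * |u i|
          have h1 : ‖v i‖ < C * ‖u i‖ := by
            have := hCi i
            rw [div_lt_iff₀ hupos] at this
            exact this
          have h2 : C ≤ (r k) ^ (a - b) := by
            calc C ≤ r k := by simp only [hr]; linarith [Nat.cast_nonneg (α := ℝ) k]
            _ = (r k) ^ (1:ℤ) := (zpow_one _).symm
            _ ≤ (r k) ^ (a - b) := zpow_le_zpow_right₀ (hr1 k) (by omega)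
          have h3 : ‖v i‖ < (r k) ^ (a - b) * ‖u i‖ := by
            calc ‖v i‖ < C * ‖u i‖ := h1
            _ ≤ (r k) ^ (a - b) * ‖u i‖ :=
              mul_le_mul_of_nonneg_right h2 (norm_nonneg _)
          rw [habs] at h3
          have hrz : (r k) ^ (b - a) = ((r k) ^ (a - b))⁻¹ := by
            rw [← zpow_neg]
            congr 1
            omega
          rw [hrz] at h3
          have hrpow : (0:ℝ) < (r k) ^ (a - b) := zpow_pos (hrpos k) _
          rw [← mul_assoc, mul_inv_cancel₀ hrpow.ne', one_mul] at h3
          exact lt_irrefl _ h3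
      · have : Tendsto r atTop atTop :=
          tendsto_atTop_add_const_right _ C tendsto_natCast_atTop_atTop
        simpa only [habst] using this
      · have heq : (fun k => fun i : F => t k ^ a * xk k i)
            = fun _ => fun i : F => w i := by
          funext k i
          rw [hxki, huF0 i i.2, mul_zero, add_zero, ← mul_assoc, ← zpow_add₀ (ht0 k)]
          rw [hwF i i.2]
          norm_num
        rw [heq]
        exact tendsto_const_nhds
      · rw [tendsto_pi_nhds]
        rintro ⟨i, hi⟩
        simp only [Set.mem_compl_iff] at hi
        have heq : ∀ k, t k ^ b * xk k i = t k ^ (b - a) * v i + u i := by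
          intro k
          rw [hxki, mul_add, ← mul_assoc, ← mul_assoc, ← zpow_add₀ (ht0 k),
            ← zpow_add₀ (ht0 k), show b + -a = b - a by ring,
            show b + -b = (0:ℤ) by ring, zpow_zero, one_mul]
        simp only [heq]
        have htz : Tendsto (fun k => t k ^ (b - a)) atTop (𝓝 0) := by
          have hR : Tendsto (fun k => (r k) ^ (b - a)) atTop (𝓝 0) :=
            (tendsto_zpow_atTop_zero (by omega)).comp
              (tendsto_atTop_add_const_right _ C tendsto_natCast_atTop_atTop)
          have := (Complex.continuous_ofReal.tendsto 0).comp hR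
          simpa only [Function.comp_def, Complex.ofReal_zpow,
            Complex.ofReal_zero] using this
        have : Tendsto (fun k => t k ^ (b - a) * v i + u i) atTop (𝓝 (0 * v i + u i)) :=
          (htz.mul_const _).add_const _
        simpa [(hwFc i hi)] using this
end

section
/- With A = (a_1,…,a_n) spanning ℤ^m, lying on an affine hyperplane (⟨u,a_j⟩ = 1 for some u), and B = (b_1,…,b_n) ⊆ ℤ^d a Gale dual (d = n − m), the following set equality holds: { c ∈ ℂ^n : there exists x ∈ (ℂˣ)^m such that Σ_{j=1}^n c_j·⟨v,a_j⟩·x^{a_j} = 0 for all v ∈ ℂ^m } = { (x^{a_1}·⟨b_1,y⟩, …, x^{a_n}·⟨b_n,y⟩) : x ∈ (ℂˣ)^m, y ∈ ℂ^d }. In particular the dual variety X*_A — the closure in ℂ^n of the set of coefficient vectors of hyperplanes containing a tangent space of the torus orbit Y_A = {(x^{a_1},…,x^{a_n}) : x ∈ (ℂˣ)^m} — is the closure of the image of the parameterization (x,y) ↦ (x^{a_j}·⟨b_j,y⟩)_j. (Proposition 3.2, first part.) -/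
open Filter Topology

/-- `λ_B : ℂ^d → ℂ^n`, `y ↦ (⟨b_j, y⟩)_j`. -/
noncomputable def lamB {d n : ℕ} (b : Fin n → Fin d → ℤ) (y : Fin d → ℂ) : Fin n → ℂ :=
  fun j => ∑ k, (b j k : ℂ) * y k

/-- `x ↦ (x^{a_j})_j`, the monomial parameterization of the torus `Y_A`. -/
noncomputable def xPow {m n : ℕ} (a : Fin n → Fin m → ℤ) (x : Fin m → ℂ) : Fin n → ℂ :=
  fun j => ∏ i, x i ^ (a j i)

lemma xPow_ne_zero {m n : ℕ} (a : Fin n → Fin m → ℤ) {x : Fin m → ℂ}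
    (hx : ∀ i, x i ≠ 0) (j : Fin n) : xPow a x j ≠ 0 := by
  refine Finset.prod_ne_zero_iff.2 fun i _ => ?_
  exact zpow_ne_zero _ (hx i)

lemma xPow_inv {m n : ℕ} (a : Fin n → Fin m → ℤ) (x : Fin m → ℂ) (j : Fin n) :
    xPow a (fun i => (x i)⁻¹) j = (xPow a x j)⁻¹ := by
  simp [xPow, inv_zpow, Finset.prod_inv_distrib]

lemma sum_swap_aux {m n : ℕ} (a : Fin n → Fin m → ℤ) (c X : Fin n → ℂ) (v : Fin m → ℂ) :
    ∑ j, c j * (∑ i, v i * (a j i : ℂ)) * X j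
      = ∑ i, v i * ∑ j, c j * (a j i : ℂ) * X j := by
  have h : ∀ j, c j * (∑ i, v i * (a j i : ℂ)) * X j = ∑ i, v i * (c j * (a j i : ℂ) * X j) := by
    intro j
    rw [Finset.mul_sum, Finset.sum_mul]
    exact Finset.sum_congr rfl fun i _ => by ring
  rw [Finset.sum_congr rfl fun j _ => h j, Finset.sum_comm]
  exact Finset.sum_congr rfl fun i _ => (Finset.mul_sum _ _ _).symm

/-- **Proposition 3.2, first part.** With `A` spanning `ℤ^m`, lying on an
affine hyperplane, and `B` a Gale dual, the set of coefficient vectors `c` of hyperplanes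
containing the tangent space of `Y_A` at some point `(x^{a_j})_j` with `x ∈ (ℂˣ)^m`
equals the image of the parameterization `(x,y) ↦ (x^{a_j}·⟨b_j,y⟩)_j`; in particular the
dual variety `X*_A` is the closure of the image of this parameterization. -/
theorem stmt10 {m d n : ℕ} (hn : n = m + d)
    (a : Fin n → Fin m → ℤ)
    (hspan : Submodule.span ℤ (Set.range a) = ⊤)
    (u : Fin m → ℤ) (hu : ∀ j, ∑ i, u i * a j i = 1)
    (b : Fin n → Fin d → ℤ)
    (hinj : Function.Injective (lamB b))
    (hker : Set.range (lamB b) = {c : Fin n → ℂ | ∀ i, ∑ j, c j * (a j i : ℂ) = 0}) :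
    ({c : Fin n → ℂ | ∃ x : Fin m → ℂ, (∀ i, x i ≠ 0) ∧
        ∀ v : Fin m → ℂ, ∑ j, c j * (∑ i, v i * (a j i : ℂ)) * xPow a x j = 0} =
      {c : Fin n → ℂ | ∃ x : Fin m → ℂ, (∀ i, x i ≠ 0) ∧
        ∃ y : Fin d → ℂ, c = fun j => xPow a x j * lamB b y j}) ∧
    closure {c : Fin n → ℂ | ∃ x : Fin m → ℂ, (∀ i, x i ≠ 0) ∧
        ∀ v : Fin m → ℂ, ∑ j, c j * (∑ i, v i * (a j i : ℂ)) * xPow a x j = 0} =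
      closure {c : Fin n → ℂ | ∃ x : Fin m → ℂ, (∀ i, x i ≠ 0) ∧
        ∃ y : Fin d → ℂ, c = fun j => xPow a x j * lamB b y j} := by
  have key : ({c : Fin n → ℂ | ∃ x : Fin m → ℂ, (∀ i, x i ≠ 0) ∧
        ∀ v : Fin m → ℂ, ∑ j, c j * (∑ i, v i * (a j i : ℂ)) * xPow a x j = 0} =
      {c : Fin n → ℂ | ∃ x : Fin m → ℂ, (∀ i, x i ≠ 0) ∧
        ∃ y : Fin d → ℂ, c = fun j => xPow a x j * lamB b y j}) := by
    ext c
    constructor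
    · rintro ⟨x, hx, hv⟩
      refine ⟨fun i => (x i)⁻¹, fun i => inv_ne_zero (hx i), ?_⟩
      have hmem : (fun j => c j * xPow a x j) ∈
          {c : Fin n → ℂ | ∀ i, ∑ j, c j * (a j i : ℂ) = 0} := by
        intro i
        have := hv (Pi.single i (1:ℂ))
        rw [sum_swap_aux] at this
        have h2 : ∀ i', (Pi.single i 1 : Fin m → ℂ) i' * ∑ j, c j * (a j i' : ℂ) * xPow a x j
            = if i' = i then ∑ j, c j * (a j i : ℂ) * xPow a x j else 0 := by
          intro i'
          by_cases h : i' = i <;> simp [h, Pi.single_apply]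
        rw [Finset.sum_congr rfl (fun i' _ => h2 i')] at this
        rw [Finset.sum_ite_eq' Finset.univ i] at this
        simp only [Finset.mem_univ, if_true] at this
        rw [← this]
        exact Finset.sum_congr rfl fun j _ => by ring
      rw [← hker] at hmem
      obtain ⟨y, hy⟩ := hmem
      refine ⟨y, funext fun j => ?_⟩
      have := congrFun hy j
      rw [xPow_inv, this, mul_comm (c j), inv_mul_cancel_left₀ (xPow_ne_zero a hx j)]
    · rintro ⟨x, hx, y, rfl⟩
      refine ⟨fun i => (x i)⁻¹, fun i => inv_ne_zero (hx i), fun v => ?_⟩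
      have hmem : lamB b y ∈ {c : Fin n → ℂ | ∀ i, ∑ j, c j * (a j i : ℂ) = 0} := by
        rw [← hker]; exact ⟨y, rfl⟩
      rw [sum_swap_aux]
      have h1 : ∀ i, ∑ j, (xPow a x j * lamB b y j) * (a j i : ℂ) *
          xPow a (fun i => (x i)⁻¹) j = ∑ j, lamB b y j * (a j i : ℂ) := by
        intro i
        refine Finset.sum_congr rfl fun j _ => ?_
        rw [xPow_inv]
        field_simp [xPow_ne_zero a hx j]
      simp_rw [h1]
      have : ∀ i, ∑ j, lamB b y j * (a j i : ℂ) = 0 := hmem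
      simp [this]
  exact ⟨key, by rw [key]⟩
end

section
/- Let J be a finite index set and b : J → ℤ^d nonzero vectors spanning ℝ^d with Σ_{j∈J} b_j = 0, and let ∅ = F_0 ⊊ F_1 ⊊ … ⊊ F_{d−1} ⊊ F_d = J be a non-splitting flag of flats of B. Fix ℓ ∈ {1,…,d−1} and let π : ℚ^d → ℚ^d / span_ℚ{b_j : j ∈ F_ℓ} be the quotient map. Then: (i) π(b_j) ≠ 0 for every j ∉ F_ℓ; (ii) Σ_{j ∈ J∖F_ℓ} π(b_j) = 0; (iii) for each i with ℓ < i ≤ d−1, the set F_i ∖ F_ℓ is a flat of the restricted configuration (π(b_j))_{j∈J∖F_ℓ}, i.e. {j ∈ J∖F_ℓ : π(b_j) ∈ span_ℚ{π(b_i) : i ∈ F_i∖F_ℓ}} = F_i∖F_ℓ; and (iv) Σ_{j ∈ F_i∖F_ℓ} π(b_j) ∉ span_ℚ{π(b_j) : j ∈ F_{i−1}∖F_ℓ}. Hence the restriction B|_L of B to the non-splitting flat subspace L corresponding to F_ℓ again has sum zero and admits a non-splitting flag, so B|_L is Gale dual to a nondefective configuration and the restricted discriminant D_{B|L} is a reduced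 discriminant. (Lemma 4.4, last part.) -/
/-- The rational vector `(b_j)_k ∈ ℚ^d` attached to `b_j ∈ ℤ^d`. -/
def bQ {d : ℕ} {J : Type*} (b : J → Fin d → ℤ) (j : J) : Fin d → ℚ :=
  fun k => (b j k : ℚ)

/-- The `ℚ`-span of the vectors `b_j`, `j ∈ S`. -/
def spanF {d : ℕ} {J : Type*} (b : J → Fin d → ℤ) (S : Set J) : Submodule ℚ (Fin d → ℚ) :=
  Submodule.span ℚ (bQ b '' S)


section Helpers

variable {d : ℕ} {J : Type*}

lemma spanF_mono (b : J → Fin d → ℤ) {S T : Finset J} (h : S ⊆ T) :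
    spanF b ↑S ≤ spanF b ↑T :=
  Submodule.span_mono (Set.image_mono (by exact_mod_cast h))

lemma chain_mono (F : ℕ → Finset J) (hchain : ∀ i < d, F i ⊂ F (i + 1))
    {a c : ℕ} (h : a ≤ c) (hc : c ≤ d) : F a ⊆ F c := by
  induction c with
  | zero => simp [Nat.le_zero.mp h]
  | succ n ih =>
    rcases Nat.lt_or_ge a (n + 1) with h' | h'
    · exact (ih (Nat.lt_succ_iff.mp h') (by omega)).trans
        (subset_of_ssubset (hchain n (by omega)))
    · have : a = n + 1 := le_antisymm h h'
      simp [this]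

lemma mem_map_mkQ {V : Type*} [AddCommGroup V] [Module ℚ V]
    (K M : Submodule ℚ V) (x : V) :
    K.mkQ x ∈ M.map K.mkQ ↔ x ∈ M ⊔ K := by
  rw [← Submodule.mem_comap, Submodule.comap_map_eq, Submodule.ker_mkQ]

lemma key_span (b : J → Fin d → ℤ) [DecidableEq J] {S T : Finset J} (hTS : T ⊆ S) :
    Submodule.span ℚ ((fun j' => (spanF b ↑T).mkQ (bQ b j')) '' ↑(S \ T)) =
      Submodule.map (spanF b ↑T).mkQ (spanF b ↑S) := by
  apply le_antisymm
  · rw [Submodule.span_le]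
    rintro x ⟨j, hj, rfl⟩
    have hjS : j ∈ S := (Finset.mem_sdiff.mp (Finset.mem_coe.mp hj)).1
    exact ⟨bQ b j, Submodule.subset_span ⟨j, hjS, rfl⟩, rfl⟩
  · show Submodule.map _ (Submodule.span ℚ (bQ b '' ↑S)) ≤ _
    rw [Submodule.map_span]
    apply Submodule.span_le.mpr
    rintro x ⟨y, ⟨j, hj, rfl⟩, rfl⟩
    by_cases hjT : j ∈ T
    · have hz : bQ b j ∈ spanF b ↑T := Submodule.subset_span ⟨j, hjT, rfl⟩
      have h0 : (spanF b ↑T).mkQ (bQ b j) = 0 :=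
        (Submodule.Quotient.mk_eq_zero _).mpr hz
      rw [Submodule.mkQ_apply] at h0 ⊢
      rw [h0]; exact zero_mem _
    · exact Submodule.subset_span ⟨j, by
        simp only [Finset.coe_sdiff, Set.mem_diff, Finset.mem_coe]
        exact ⟨hj, hjT⟩, rfl⟩

end Helpers

/-- **Lemma 4.4, last part.** Let `b : J → ℤ^d` be nonzero vectors
spanning `ℝ^d` with `Σ_j b_j = 0`, and let `∅ = F_0 ⊊ F_1 ⊊ ⋯ ⊊ F_d = J` be a
non-splitting flag of flats.  Fix `1 ≤ ℓ ≤ d−1` and let `π` be the quotient map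
`ℚ^d → ℚ^d/span_ℚ{b_j : j ∈ F_ℓ}`.  Then: (i) `π(b_j) ≠ 0` for `j ∉ F_ℓ`;
(ii) `Σ_{j∉F_ℓ} π(b_j) = 0`; (iii) each `F_i ∖ F_ℓ` (for `ℓ < i ≤ d−1`) is a flat of the
restricted configuration `(π(b_j))_{j∉F_ℓ}`; and (iv)
`Σ_{j∈F_i∖F_ℓ} π(b_j) ∉ span_ℚ{π(b_j) : j ∈ F_{i−1}∖F_ℓ}`.  Hence the restriction of `B`
to the non-splitting flat subspace corresponding to `F_ℓ` again has sum zero and admits a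
non-splitting flag. -/

theorem stmt16 {d : ℕ} {J : Type*} [Fintype J] [DecidableEq J]
    (b : J → Fin d → ℤ) (hb0 : ∀ j, b j ≠ 0)
    (hspan : Submodule.span ℝ (Set.range fun j => fun k => (b j k : ℝ)) = ⊤)
    (hsum : ∑ j, b j = 0)
    (F : ℕ → Finset J)
    (hF0 : F 0 = ∅) (hFd : F d = Finset.univ)
    (hchain : ∀ i < d, F i ⊂ F (i + 1))
    (hflats : ∀ i ≤ d, ∀ j, j ∈ F i ↔ bQ b j ∈ spanF b ↑(F i))
    (hrank : ∀ i ≤ d, Module.finrank ℚ (spanF b ↑(F i)) = i)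
    (hNS : ∀ i, 1 ≤ i → i ≤ d - 1 →
      (∑ j ∈ F i, bQ b j) ∉ spanF b ↑(F (i - 1)))
    (ℓ : ℕ) (hℓ1 : 1 ≤ ℓ) (hℓd : ℓ ≤ d - 1) :
    (∀ j ∉ F ℓ, (spanF b ↑(F ℓ)).mkQ (bQ b j) ≠ 0) ∧
    (∑ j ∈ (F ℓ)ᶜ, (spanF b ↑(F ℓ)).mkQ (bQ b j) = 0) ∧
    (∀ i, ℓ < i → i ≤ d - 1 → ∀ j,
      (j ∉ F ℓ ∧ (spanF b ↑(F ℓ)).mkQ (bQ b j) ∈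
          Submodule.span ℚ ((fun j' => (spanF b ↑(F ℓ)).mkQ (bQ b j')) '' ↑(F i \ F ℓ)))
        ↔ j ∈ F i \ F ℓ) ∧
    (∀ i, ℓ < i → i ≤ d - 1 →
      (∑ j ∈ F i \ F ℓ, (spanF b ↑(F ℓ)).mkQ (bQ b j)) ∉
        Submodule.span ℚ ((fun j' => (spanF b ↑(F ℓ)).mkQ (bQ b j')) '' ↑(F (i - 1) \ F ℓ))) := by

  have hd2 : 2 ≤ d := by omega
  have hℓd' : ℓ ≤ d := by omega
  set K := spanF b ↑(F ℓ) with hK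
  -- sum over Fℓ lies in K
  have hsumK : ∑ j ∈ F ℓ, bQ b j ∈ K :=
    Submodule.sum_mem _ fun j hj => Submodule.subset_span ⟨j, hj, rfl⟩
  have hsumQ : ∑ j : J, bQ b j = 0 := by
    funext k
    have h := congrFun hsum k
    simp only [Finset.sum_apply, Pi.zero_apply] at h ⊢
    simp only [bQ]
    exact_mod_cast h
  refine ⟨?_, ?_, ?_, ?_⟩
  · -- (i)
    intro j hj h0
    have hmem : bQ b j ∈ K := (Submodule.Quotient.mk_eq_zero _).mp h0
    exact hj ((hflats ℓ hℓd' j).mpr hmem)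
  · -- (ii)
    have hsplit : ∑ j ∈ (F ℓ)ᶜ, bQ b j = - ∑ j ∈ F ℓ, bQ b j := by
      have h := Finset.sum_compl_add_sum (F ℓ) (bQ b)
      rw [hsumQ] at h
      linear_combination h
    rw [← map_sum, hsplit, map_neg, neg_eq_zero]
    exact (Submodule.Quotient.mk_eq_zero _).mpr hsumK
  · -- (iii)
    intro i hℓi hid j
    have hsub : F ℓ ⊆ F i := chain_mono F hchain (le_of_lt hℓi) (by omega)
    have hKle : K ≤ spanF b ↑(F i) := spanF_mono b hsub
    rw [key_span b hsub]
    constructor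
    · rintro ⟨hjℓ, hmem⟩
      rw [mem_map_mkQ, sup_eq_left.mpr hKle] at hmem
      exact Finset.mem_sdiff.mpr ⟨(hflats i (by omega) j).mpr hmem, hjℓ⟩
    · intro hj
      obtain ⟨hji, hjℓ⟩ := Finset.mem_sdiff.mp hj
      refine ⟨hjℓ, ?_⟩
      rw [mem_map_mkQ]
      exact Submodule.mem_sup_left ((hflats i (by omega) j).mp hji)
  · -- (iv)
    intro i hℓi hid hmem
    have hsub : F ℓ ⊆ F i := chain_mono F hchain (le_of_lt hℓi) (by omega)
    have hsub' : F ℓ ⊆ F (i - 1) := chain_mono F hchain (by omega) (by omega)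
    have hKle : K ≤ spanF b ↑(F (i - 1)) := spanF_mono b hsub'
    rw [key_span b hsub', ← map_sum, mem_map_mkQ, sup_eq_left.mpr hKle] at hmem
    apply hNS i (by omega) hid
    have h := Finset.sum_sdiff (f := bQ b) hsub
    rw [← h]
    exact Submodule.add_mem _ hmem (hKle hsumK)
end
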